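/- arXiv:1911.13195 — 2 statements merged into one kernel-verified Lean document; each statement's English description precedes it below -/
import Mathlib

section
/- Let G be a finite group and H ≤ G a subgroup. If every group homomorphism H → ℂˣ extends to a group homomorphism G → ℂˣ, then G' ∩ H = H', where G' and H' are the commutator subgroups of G and H respectively. -/
/-! A linear character of `H` kills `H'`; conversely, since the characters of the finite abelian
group `H / H'` separate its points, an element of `H` killed by every linear character lies in
`H'`. An element of `G' ∩ H` is killed by every linear character of `G`, hence, when these
restrict onto all linear characters of `H`, by every linear character of `H`. -/

theorem mem_commutator_of_forall_apply_eq_one {H M : Type*} [Group H] [Finite H] [CommMonoid M]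
    [HasEnoughRootsOfUnity M (Monoid.exponent (Abelianization H))] {x : H}
    (hx : ∀ φ : H →* Mˣ, φ x = 1) : x ∈ commutator H := by
  by_contra hx'
  have hne : Abelianization.of x ≠ 1 := fun h => hx' ((QuotientGroup.eq_one_iff x).mp h)
  obtain ⟨φ, hφ⟩ := CommGroup.exists_apply_ne_one_of_hasEnoughRootsOfUnity (Abelianization H) M hne
  exact hφ (hx (φ.comp Abelianization.of))

theorem commutator_inf_eq_of_linear_characters_extend
    {G : Type*} [Group G] [Finite G] (H : Subgroup G)
    (hext : ∀ lam : H →* ℂˣ, ∃ χ : G →* ℂˣ, ∀ h : H, χ h = lam h) :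
    commutator G ⊓ H = Subgroup.map H.subtype (commutator H) := by
  rw [Subgroup.map_subtype_commutator]
  refine le_antisymm ?_ (le_inf (Subgroup.commutator_mono le_top le_top) H.commutator_le_self)
  rintro x ⟨hxG, hxH⟩
  have hx : (⟨x, hxH⟩ : H) ∈ commutator H := mem_commutator_of_forall_apply_eq_one fun lam => by
    obtain ⟨χ, hχ⟩ := hext lam
    rw [← hχ]
    exact Abelianization.commutator_subset_ker χ hxG
  rw [← H.map_subtype_commutator]
  exact ⟨_, hx, rfl⟩
end

section
/- Let G be a finite group, π a set of primes, H a Hall π-subgroup of G and K a Hall π'-subgroup of G. If G' ∩ H = H' (commutator subgroups), then every group homomorphism H → ℂˣ extends to a group homomorphism G → ℂˣ. -/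
/-!
Since `G' ∩ H = H'`, the abelianization `H/H'` embeds in `G/G'`. A linear character of `H`
factors through `H/H'`, and `ℂˣ` is a divisible abelian group, i.e. an injective `ℤ`-module, so
the character extends from `H/H'` to `G/G'` and hence to `G`.
-/

/-- `H` is a Hall `π`-subgroup: `|H|` is a `π`-number and `[G:H]` is a `π'`-number. -/
def IsHallSubgroup {G : Type*} [Group G] (π : Set ℕ) (H : Subgroup G) : Prop :=
  (∀ p : ℕ, p.Prime → p ∣ Nat.card H → p ∈ π) ∧
  (∀ p : ℕ, p.Prime → p ∣ H.index → p ∉ π)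

noncomputable instance IsAlgClosed.rootableByUnitsNat {k : Type*} [Field k] [IsAlgClosed k] :
    RootableBy kˣ ℕ :=
  rootableByOfPowLeftSurj _ _ fun {n} hn x => by
    obtain ⟨z, hz⟩ := IsAlgClosed.exists_pow_nat_eq (x : k) (Nat.pos_of_ne_zero hn)
    have hz0 : z ≠ 0 := by
      rintro rfl
      exact x.ne_zero (by rw [← hz, zero_pow hn])
    exact ⟨Units.mk0 z hz0, Units.ext <| by simpa using hz⟩

noncomputable instance IsAlgClosed.rootableByUnitsInt {k : Type*} [Field k] [IsAlgClosed k] :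
    RootableBy kˣ ℤ :=
  Group.rootableByIntOfRootableByNat _

noncomputable instance Additive.divisibleByInt {A : Type*} [Group A] [RootableBy A ℤ] :
    DivisibleBy (Additive A) ℤ where
  div a n := .ofMul (RootableBy.root a.toMul n)
  div_zero a := congrArg Additive.ofMul (RootableBy.root_zero a.toMul)
  div_cancel a hn := congrArg Additive.ofMul (RootableBy.root_cancel a.toMul hn)

theorem MonoidHom.exists_comp_eq_of_injective {A B C : Type*} [CommGroup A] [CommGroup B]
    [CommGroup C] [RootableBy C ℤ] {i : A →* B} (hi : Function.Injective i) (f : A →* C) :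
    ∃ g : B →* C, g.comp i = f := by
  obtain ⟨g, hg⟩ := (Module.Baer.of_divisible (Additive C)).extension_property_addMonoidHom
    (MonoidHom.toAdditive i) hi (MonoidHom.toAdditive f)
  exact ⟨MonoidHom.toAdditive.symm g, MonoidHom.ext fun a => congrArg Additive.toMul
    (DFunLike.congr_fun hg (Additive.ofMul a))⟩

theorem Abelianization.map_subtype_injective {G : Type*} [Group G] {H : Subgroup G}
    (hcomm : commutator G ⊓ H ≤ (commutator H).map H.subtype) :
    Function.Injective (Abelianization.map H.subtype) := by
  refine (injective_iff_map_eq_one _).2 fun x hx => ?_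
  induction x using QuotientGroup.induction_on with | H h => ?_
  have hG : (h : G) ∈ commutator G := by rwa [← Abelianization.ker_of]
  obtain ⟨h', hh', hh'h⟩ := hcomm ⟨hG, h.2⟩
  rwa [Subtype.ext hh'h, ← Abelianization.ker_of] at hh'

theorem linear_characters_extend_of_commutator_inf_general
    {G : Type*} [Group G] (H : Subgroup G)
    (hcomm : commutator G ⊓ H = Subgroup.map H.subtype (commutator H)) :
    ∀ lam : H →* ℂˣ, ∃ χ : G →* ℂˣ, ∀ h : H, χ h = lam h := by
  intro lam
  obtain ⟨χ, hχ⟩ := MonoidHom.exists_comp_eq_of_injective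
    (Abelianization.map_subtype_injective hcomm.le) (Abelianization.lift lam)
  exact ⟨χ.comp Abelianization.of, fun h => DFunLike.congr_fun hχ (Abelianization.of h)⟩

theorem linear_characters_extend_of_commutator_inf
    {G : Type*} [Group G] [Finite G] (π : Set ℕ) (H K : Subgroup G)
    (hH : IsHallSubgroup π H) (hK : IsHallSubgroup πᶜ K)
    (hcomm : commutator G ⊓ H = Subgroup.map H.subtype (commutator H)) :
    ∀ lam : H →* ℂˣ, ∃ χ : G →* ℂˣ, ∀ h : H, χ h = lam h :=
  linear_characters_extend_of_commutator_inf_general H hcomm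
end
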